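/- For two permutations σ₁, σ₂ of {1,…,m} and any probability distribution P over {0,1}^m, E_P[ℓ_R(σ₂,·) − ℓ_R(σ₁,·)] = Σ_{i=1}^m (σ₂⁻¹(i) − σ₁⁻¹(i)) · P(Y_i = 1). -/
import Mathlib

open Finset

def rankLoss {m : ℕ} (σ : Equiv.Perm (Fin m)) (y : Fin m → Bool) : ℕ :=
  ∑ p ∈ Finset.univ.filter (fun p : Fin m × Fin m => p.1 < p.2),
    if y (σ p.1) = false ∧ y (σ p.2) = true then 1 else 0

/-- Marginal probability `P(Y_i = 1)`. -/
def marg {m : ℕ} (P : (Fin m → Bool) → ℝ) (i : Fin m) : ℝ :=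
  ∑ y : Fin m → Bool, if y i = true then P y else 0

lemma A_eq {m : ℕ} (σ : Equiv.Perm (Fin m)) (y : Fin m → Bool) :
    ∑ p ∈ Finset.univ.filter (fun p : Fin m × Fin m => p.1 < p.2),
      (if y (σ p.2) = true then (1:ℝ) else 0)
    = ∑ i : Fin m, (σ.symm i : ℝ) * (if y i = true then 1 else 0) := by
  rw [Finset.sum_filter, Fintype.sum_prod_type, Finset.sum_comm]
  have hcard : ∀ l : Fin m, (univ.filter (fun k : Fin m => k < l)).card = (l : ℕ) := by
    intro l
    have : univ.filter (fun k : Fin m => k < l) = Finset.Iio l := by ext k; simp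
    rw [this, Fin.card_Iio]
  have h1 : ∀ l : Fin m, (∑ k : Fin m, if k < l then (if y (σ l) = true then (1:ℝ) else 0) else 0)
      = (l : ℝ) * (if y (σ l) = true then (1:ℝ) else 0) := by
    intro l
    rw [← Finset.sum_filter, Finset.sum_const, hcard, nsmul_eq_mul]
  rw [Finset.sum_congr rfl (fun l _ => h1 l)]
  have := Equiv.sum_comp σ.symm (fun l : Fin m => (l : ℝ) * (if y (σ l) = true then (1:ℝ) else 0))
  rw [← this]
  refine Finset.sum_congr rfl fun i _ => ?_
  simp

lemma B_invariant {m : ℕ} (σ : Equiv.Perm (Fin m)) (y : Fin m → Bool) :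
    ∑ p ∈ Finset.univ.filter (fun p : Fin m × Fin m => p.1 < p.2),
      (if y (σ p.1) = true ∧ y (σ p.2) = true then (1:ℝ) else 0)
    = ∑ p ∈ Finset.univ.filter (fun p : Fin m × Fin m => p.1 < p.2),
      (if y p.1 = true ∧ y p.2 = true then (1:ℝ) else 0) := by
  -- doubling trick
  have key : ∀ z : Fin m → Bool,
      (2:ℝ) * (∑ p ∈ Finset.univ.filter (fun p : Fin m × Fin m => p.1 < p.2),
        (if z p.1 = true ∧ z p.2 = true then (1:ℝ) else 0))
      = ∑ p ∈ Finset.univ.filter (fun p : Fin m × Fin m => p.1 ≠ p.2),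
        (if z p.1 = true ∧ z p.2 = true then (1:ℝ) else 0) := by
    intro z
    have hsplit : Finset.univ.filter (fun p : Fin m × Fin m => p.1 ≠ p.2)
        = (Finset.univ.filter (fun p : Fin m × Fin m => p.1 < p.2)) ∪
          (Finset.univ.filter (fun p : Fin m × Fin m => p.2 < p.1)) := by
      ext p
      simp only [Finset.mem_filter, Finset.mem_union, Finset.mem_univ, true_and]
      constructor
      · exact fun h => h.lt_or_gt
      · rintro (h | h)
        · exact ne_of_lt h
        · exact ne_of_gt h
    have hdisj : Disjoint (Finset.univ.filter (fun p : Fin m × Fin m => p.1 < p.2))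
        (Finset.univ.filter (fun p : Fin m × Fin m => p.2 < p.1)) := by
      rw [Finset.disjoint_left]
      intro p hp1 hp2
      simp only [Finset.mem_filter, Finset.mem_univ, true_and] at hp1 hp2
      exact absurd (lt_trans hp1 hp2) (lt_irrefl _)
    rw [hsplit, Finset.sum_union hdisj]
    have hswap : ∑ p ∈ Finset.univ.filter (fun p : Fin m × Fin m => p.2 < p.1),
        (if z p.1 = true ∧ z p.2 = true then (1:ℝ) else 0)
        = ∑ p ∈ Finset.univ.filter (fun p : Fin m × Fin m => p.1 < p.2),
        (if z p.1 = true ∧ z p.2 = true then (1:ℝ) else 0) := by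
      refine Finset.sum_nbij' (fun p => (p.2, p.1)) (fun p => (p.2, p.1)) ?_ ?_ ?_ ?_ ?_
      · intro p hp; simp at hp ⊢; exact hp
      · intro p hp; simp at hp ⊢; exact hp
      · intro p _; rfl
      · intro p _; rfl
      · intro p _; simp [and_comm]
    rw [hswap]; ring
  have hperm : ∑ p ∈ Finset.univ.filter (fun p : Fin m × Fin m => p.1 ≠ p.2),
      (if y (σ p.1) = true ∧ y (σ p.2) = true then (1:ℝ) else 0)
      = ∑ p ∈ Finset.univ.filter (fun p : Fin m × Fin m => p.1 ≠ p.2),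
      (if y p.1 = true ∧ y p.2 = true then (1:ℝ) else 0) := by
    refine Finset.sum_nbij' (fun p => (σ p.1, σ p.2)) (fun p => (σ.symm p.1, σ.symm p.2)) ?_ ?_ ?_ ?_ ?_
    · intro p hp
      simp only [Finset.mem_filter, Finset.mem_univ, true_and] at hp ⊢
      exact fun h => hp (σ.injective h)
    · intro p hp
      simp only [Finset.mem_filter, Finset.mem_univ, true_and] at hp ⊢
      exact fun h => hp (σ.symm.injective h)
    · intro p _; simp
    · intro p _; simp
    · intro p _; rfl
  have h1 := key (fun i => y (σ i))
  have h2 := key y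
  have : (2:ℝ) * (∑ p ∈ Finset.univ.filter (fun p : Fin m × Fin m => p.1 < p.2),
      (if y (σ p.1) = true ∧ y (σ p.2) = true then (1:ℝ) else 0))
      = (2:ℝ) * (∑ p ∈ Finset.univ.filter (fun p : Fin m × Fin m => p.1 < p.2),
      (if y p.1 = true ∧ y p.2 = true then (1:ℝ) else 0)) := by
    rw [h1, h2, hperm]
  linarith

lemma rankLoss_eq {m : ℕ} (σ : Equiv.Perm (Fin m)) (y : Fin m → Bool) :
    (rankLoss σ y : ℝ)
    = (∑ i : Fin m, (σ.symm i : ℝ) * (if y i = true then 1 else 0))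
      - ∑ p ∈ Finset.univ.filter (fun p : Fin m × Fin m => p.1 < p.2),
          (if y p.1 = true ∧ y p.2 = true then (1:ℝ) else 0) := by
  rw [← A_eq σ y, ← B_invariant σ y, ← Finset.sum_sub_distrib]
  unfold rankLoss
  push_cast
  refine Finset.sum_congr rfl fun p _ => ?_
  cases h1 : y (σ p.1) <;> cases h2 : y (σ p.2) <;> simp [h1, h2]

/-- `E_P[ℓ_R(σ₂,·) − ℓ_R(σ₁,·)] = Σ_i (σ₂⁻¹(i) − σ₁⁻¹(i))·P(Y_i=1)`. -/
theorem stmt5 (m : ℕ) (σ₁ σ₂ : Equiv.Perm (Fin m))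
    (P : (Fin m → Bool) → ℝ) (hP0 : ∀ y, 0 ≤ P y)
    (hP1 : ∑ y : Fin m → Bool, P y = 1) :
    (∑ y : Fin m → Bool, P y * ((rankLoss σ₂ y : ℝ) - (rankLoss σ₁ y : ℝ))) =
      ∑ i : Fin m, ((σ₂.symm i : ℝ) - (σ₁.symm i : ℝ)) * marg P i := by
  have hdiff : ∀ y : Fin m → Bool,
      (rankLoss σ₂ y : ℝ) - (rankLoss σ₁ y : ℝ)
      = ∑ i : Fin m, ((σ₂.symm i : ℝ) - (σ₁.symm i : ℝ)) * (if y i = true then 1 else 0) := by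
    intro y
    rw [rankLoss_eq σ₁ y, rankLoss_eq σ₂ y]
    have hc : ∀ A2 B A1 : ℝ, (A2 - B) - (A1 - B) = A2 - A1 := fun _ _ _ => by ring
    rw [hc, ← Finset.sum_sub_distrib]
    exact Finset.sum_congr rfl fun i _ => by ring
  calc (∑ y : Fin m → Bool, P y * ((rankLoss σ₂ y : ℝ) - (rankLoss σ₁ y : ℝ)))
      = ∑ y : Fin m → Bool, ∑ i : Fin m,
          ((σ₂.symm i : ℝ) - (σ₁.symm i : ℝ)) * (if y i = true then P y else 0) := by
        refine Finset.sum_congr rfl fun y _ => ?_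
        rw [hdiff y, Finset.mul_sum]
        refine Finset.sum_congr rfl fun i _ => ?_
        by_cases h : y i = true <;> simp [h] <;> ring
    _ = ∑ i : Fin m, ((σ₂.symm i : ℝ) - (σ₁.symm i : ℝ)) * marg P i := by
        rw [Finset.sum_comm]
        refine Finset.sum_congr rfl fun i _ => ?_
        rw [marg, Finset.mul_sum]
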